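/- arXiv:1606.05987 — 3 statements merged into one kernel-verified Lean document; each statement's English description precedes it below -/
import Mathlib

section
/- If a collection T of coalitions is T0-balanced, then the collection span(T) ∩ 2^N (all coalitions whose indicator vectors lie in the linear span of the indicator vectors of T) is also T0-balanced. -/
open Finset

noncomputable def ind (n : ℕ) (S : Finset (Fin n)) : Fin n → ℝ := fun i => if i ∈ S then 1 else 0

def IsT0Balanced (n : ℕ) (T0 T : Finset (Finset (Fin n))) : Prop :=
  ∃ γ ω : Finset (Fin n) → ℝ,
    (∀ S ∈ T0, 0 ≤ γ S) ∧ (∀ S ∈ T, 0 < ω S) ∧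
    (∑ S ∈ T0, γ S • ind n S) + (∑ S ∈ T, ω S • ind n S) = ind n Finset.univ

open Classical in
noncomputable def spanColl (n : ℕ) (T : Finset (Finset (Fin n))) : Finset (Finset (Fin n)) :=
  Finset.univ.filter (fun S => ind n S ∈ Submodule.span ℝ (ind n '' (T : Set (Finset (Fin n)))))

noncomputable def rk (n : ℕ) (T : Finset (Finset (Fin n))) : ℕ :=
  Module.finrank ℝ (Submodule.span ℝ (ind n '' (T : Set (Finset (Fin n)))))

lemma ind_injective (n : ℕ) : Function.Injective (ind n) := by
  intro S S' h
  ext i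
  have hi := congrFun h i
  simp only [ind] at hi
  by_cases h1 : i ∈ S <;> by_cases h2 : i ∈ S' <;> simp_all

/-- If `T` is `T0`-balanced then `span(T)` (as a collection of coalitions) is `T0`-balanced. -/
theorem stmt0 (n : ℕ) (T0 T : Finset (Finset (Fin n)))
    (hT : IsT0Balanced n T0 T) : IsT0Balanced n T0 (spanColl n T) := by
  obtain ⟨γ, ω, hγ, hω, hsum⟩ := hT
  have hTsub : T ⊆ spanColl n T := by
    intro S hS
    simp only [spanColl, mem_filter, mem_univ, true_and]
    exact Submodule.subset_span ⟨S, hS, rfl⟩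
  set E := spanColl n T \ T with hE
  have hrep : ∀ S : Finset (Fin n), ∃ c : Finset (Fin n) → ℝ,
      S ∈ E → ∑ S' ∈ T, c S' • ind n S' = ind n S := by
    intro S
    by_cases hS : S ∈ E
    · have hmem : ind n S ∈ Submodule.span ℝ (ind n '' (T : Set (Finset (Fin n)))) := by
        have h1 := (mem_sdiff.mp hS).1
        simpa [spanColl] using h1
      rw [show (ind n '' (T : Set (Finset (Fin n)))) = ↑(T.image (ind n)) by simp] at hmem
      obtain ⟨f, -, hf⟩ := Submodule.mem_span_finset.mp hmem
      rw [Finset.sum_image (fun a _ b _ h => ind_injective n h)] at hf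
      exact ⟨fun S' => f (ind n S'), fun _ => hf⟩
    · exact ⟨0, fun h => absurd h hS⟩
  choose c hc using hrep
  set D : Finset (Fin n) → ℝ := fun S' => ∑ S ∈ E, c S S' with hD
  set ε : ℝ := if h : T.Nonempty then T.inf' h (fun S' => ω S' / (|D S'| + 1)) else 1 with hε
  have hεpos : 0 < ε := by
    rw [hε]
    split
    · rename_i h
      rw [Finset.lt_inf'_iff]
      intro S' hS'
      exact div_pos (hω S' hS') (by positivity)
    · exact one_pos
  have hεle : ∀ S' ∈ T, ε * |D S'| < ω S' := by
    intro S' hS'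
    have hne : T.Nonempty := ⟨S', hS'⟩
    have h1 : ε ≤ ω S' / (|D S'| + 1) := by
      rw [hε, dif_pos hne]; exact Finset.inf'_le _ hS'
    have h3 : ε * (|D S'| + 1) ≤ ω S' := (le_div_iff₀ (by positivity)).mp h1
    nlinarith
  refine ⟨γ, fun S => if S ∈ T then ω S - ε * D S else ε, hγ, ?_, ?_⟩
  · intro S hS
    by_cases hST : S ∈ T
    · simp only [if_pos hST]
      have h1 := hεle S hST
      have h2 : ε * D S ≤ ε * |D S| := by
        have := le_abs_self (D S)
        nlinarith
      linarith
    · simpa [if_neg hST] using hεpos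
  · have hsplit : ∑ S ∈ spanColl n T, (if S ∈ T then ω S - ε * D S else ε) • ind n S
        = ∑ S ∈ E, ε • ind n S + ∑ S ∈ T, (ω S - ε * D S) • ind n S := by
      rw [← Finset.sum_sdiff hTsub]
      congr 1
      · exact Finset.sum_congr rfl fun S hS => by rw [if_neg (mem_sdiff.mp hS).2]
      · exact Finset.sum_congr rfl fun S hS => by rw [if_pos hS]
    rw [hsplit]
    have hE' : ∑ S ∈ E, ε • ind n S = ∑ S' ∈ T, (ε * D S') • ind n S' := by
      calc ∑ S ∈ E, ε • ind n S = ∑ S ∈ E, ∑ S' ∈ T, (ε * c S S') • ind n S' := by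
            refine Finset.sum_congr rfl fun S hS => ?_
            rw [← hc S hS, Finset.smul_sum]
            simp [mul_smul]
        _ = ∑ S' ∈ T, ∑ S ∈ E, (ε * c S S') • ind n S' := Finset.sum_comm
        _ = ∑ S' ∈ T, (ε * D S') • ind n S' := by
            refine Finset.sum_congr rfl fun S' _ => ?_
            rw [← Finset.sum_smul, ← Finset.mul_sum]
    rw [hE']
    have hcomb : ∑ S' ∈ T, (ε * D S') • ind n S' + ∑ S ∈ T, (ω S - ε * D S) • ind n S
        = ∑ S ∈ T, ω S • ind n S := by
      rw [← Finset.sum_add_distrib]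
      refine Finset.sum_congr rfl fun S _ => ?_
      rw [← add_smul]
      ring_nf
    rw [hcomb]
    exact hsum
end

section
/- Let T0, H, T be finite collections of coalitions of N with H T0-balanced, and suppose H ∪ T is NOT T0-balanced. Then there exists y ∈ ℝ^n with y(N) = 0, y(S) ≥ 0 for all S ∈ T0 ∪ H ∪ T, y(S) = 0 for all S ∈ H, and y(S') > 0 for some S' ∈ T. -/
open Finset

open Matrix

open Finset Matrix

lemma sum_dot {α : Type*} {n : ℕ} (s : Finset α) (f : α → Fin n → ℝ) (y : Fin n → ℝ) :
    (∑ S ∈ s, f S) ⬝ᵥ y = ∑ S ∈ s, f S ⬝ᵥ y := by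
  simp only [dotProduct, Finset.sum_apply, Finset.sum_mul]
  exact Finset.sum_comm

lemma farkasAux (n : ℕ) : ∀ m (g : Fin m → (Fin n → ℝ)) (x : Fin n → ℝ),
    (¬ ∃ a : Fin m → ℝ, (∀ i, 0 ≤ a i) ∧ ∑ i, a i • g i = x) →
    ∃ y : Fin n → ℝ, (∀ i, 0 ≤ g i ⬝ᵥ y) ∧ x ⬝ᵥ y < 0 := by
  intro m
  induction m with
  | zero =>
    intro g x hx
    refine ⟨-x, fun i => i.elim0, ?_⟩
    have hx0 : x ≠ 0 := by rintro rfl; exact hx ⟨0, fun i => le_refl 0, by simp⟩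
    have h1 : 0 < x ⬝ᵥ x :=
      lt_of_le_of_ne (Finset.sum_nonneg fun i _ => mul_self_nonneg _)
        (Ne.symm ((dotProduct_self_eq_zero (v := x)).not.mpr hx0))
    rw [dotProduct_neg]; linarith
  | succ m ih =>
    intro g x hx
    set gs : Fin m → Fin n → ℝ := fun i => g i.castSucc with hgs
    set gm : Fin n → ℝ := g (Fin.last m) with hgm
    by_cases hc : ∃ a : Fin m → ℝ, (∀ i, 0 ≤ a i) ∧ ∑ i, a i • gs i = x
    · exfalso
      obtain ⟨a, ha, hsum⟩ := hc
      refine hx ⟨Fin.snoc a 0, ?_, ?_⟩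
      · intro i
        refine Fin.lastCases ?_ ?_ i
        · simp
        · intro j; simpa using ha j
      · rw [Fin.sum_univ_castSucc]
        simp only [Fin.snoc_castSucc, Fin.snoc_last, zero_smul, add_zero]
        exact hsum
    · obtain ⟨y, hy, hxy⟩ := ih gs x hc
      by_cases hgmy : 0 ≤ gm ⬝ᵥ y
      · exact ⟨y, fun i => Fin.lastCases hgmy hy i, hxy⟩
      · push_neg at hgmy
        have hgmne : gm ⬝ᵥ y ≠ 0 := ne_of_lt hgmy
        set q : (Fin n → ℝ) → ℝ := fun v => (v ⬝ᵥ y) / (gm ⬝ᵥ y) with hq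
        set g'' : Fin m → Fin n → ℝ := fun i => gs i - q (gs i) • gm with hg''
        set x'' : Fin n → ℝ := x - q x • gm with hx''
        have hne : ¬ ∃ a : Fin m → ℝ, (∀ i, 0 ≤ a i) ∧ ∑ i, a i • g'' i = x'' := by
          rintro ⟨a, ha, hsum⟩
          set c : ℝ := (x ⬝ᵥ y - ∑ i, a i * (gs i ⬝ᵥ y)) / (gm ⬝ᵥ y) with hcdef
          have hsnn : 0 ≤ ∑ i, a i * (gs i ⬝ᵥ y) :=
            Finset.sum_nonneg fun i _ => mul_nonneg (ha i) (hy i)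
          have hc0 : 0 ≤ c :=
            div_nonneg_iff.mpr (Or.inr ⟨by linarith, le_of_lt hgmy⟩)
          refine hx ⟨Fin.snoc a c, ?_, ?_⟩
          · intro i
            refine Fin.lastCases ?_ ?_ i
            · simpa using hc0
            · intro j; simpa using ha j
          · rw [Fin.sum_univ_castSucc]
            simp only [Fin.snoc_castSucc, Fin.snoc_last]
            have h1 : ∀ i, a i • gs i = a i • g'' i + (a i * q (gs i)) • gm := by
              intro i; simp only [hg'', smul_sub, smul_smul]; abel
            calc (∑ i, a i • gs i) + c • gm
                = (∑ i, a i • g'' i) + ((∑ i, a i * q (gs i)) + c) • gm := by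
                  rw [Finset.sum_congr rfl (fun i _ => h1 i), Finset.sum_add_distrib,
                    add_smul, Finset.sum_smul, add_assoc]
              _ = x'' + ((∑ i, a i * q (gs i)) + c) • gm := by rw [hsum]
              _ = x := by
                  rw [hx'']
                  have hkey : (∑ i, a i * q (gs i)) + c = q x := by
                    simp only [hq, hcdef, ← mul_div_assoc]
                    rw [← Finset.sum_div, ← add_div]
                    congr 1; ring
                  rw [hkey]; abel
        obtain ⟨y', hy', hxy'⟩ := ih g'' x'' hne
        set r : ℝ := gm ⬝ᵥ y' / (gm ⬝ᵥ y) with hr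
        refine ⟨y' - r • y, ?_, ?_⟩
        · intro i
          refine Fin.lastCases ?_ ?_ i
          · rw [dotProduct_sub, dotProduct_smul, hr, smul_eq_mul]
            rw [div_mul_cancel₀ _ hgmne]
            simp [hgm]
          · intro j
            have h := hy' j
            rw [hg''] at h
            simp only [sub_dotProduct, smul_dotProduct, smul_eq_mul] at h
            rw [dotProduct_sub, dotProduct_smul, smul_eq_mul]
            have heq : r * (gs j ⬝ᵥ y) = q (gs j) * (gm ⬝ᵥ y') := by
              rw [hr, hq]; field_simp
            show 0 ≤ gs j ⬝ᵥ y' - r * (gs j ⬝ᵥ y)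
            rw [heq]; exact h
        · have h := hxy'
          rw [hx''] at h
          simp only [sub_dotProduct, smul_dotProduct, smul_eq_mul] at h
          rw [dotProduct_sub, dotProduct_smul, smul_eq_mul]
          have heq : r * (x ⬝ᵥ y) = q x * (gm ⬝ᵥ y') := by
            rw [hr, hq]; field_simp
          show x ⬝ᵥ y' - r * (x ⬝ᵥ y) < 0
          rw [heq]; exact h

lemma farkas {ι : Type} [Fintype ι] (n : ℕ) (g : ι → (Fin n → ℝ)) (x : Fin n → ℝ)
    (hx : ¬ ∃ a : ι → ℝ, (∀ i, 0 ≤ a i) ∧ ∑ i, a i • g i = x) :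
    ∃ y : Fin n → ℝ, (∀ i, 0 ≤ g i ⬝ᵥ y) ∧ x ⬝ᵥ y < 0 := by
  set e := Fintype.equivFin ι with he
  have hne : ¬ ∃ a : Fin (Fintype.card ι) → ℝ, (∀ j, 0 ≤ a j) ∧
      ∑ j, a j • g (e.symm j) = x := by
    rintro ⟨a, ha, hsum⟩
    refine hx ⟨fun i => a (e i), fun i => ha _, ?_⟩
    rw [← hsum]
    exact Fintype.sum_equiv e _ _ (fun i => by simp)
  obtain ⟨y, hy, hxy⟩ := farkasAux n (Fintype.card ι) (fun j => g (e.symm j)) x hne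
  exact ⟨y, fun i => by simpa using hy (e i), hxy⟩

section Helpers
variable {n : ℕ}

lemma ind_dot (S : Finset (Fin n)) (y : Fin n → ℝ) : ind n S ⬝ᵥ y = ∑ i ∈ S, y i := by
  simp only [dotProduct, ind, ite_mul, one_mul, zero_mul]
  rw [Finset.sum_ite_mem, Finset.univ_inter]

lemma sum_div_smul {α : Type*} (s : Finset α) (c : α → ℝ) (v : α → Fin n → ℝ) (k : ℝ) :
    ∑ S ∈ s, (c S / k) • v S = k⁻¹ • ∑ S ∈ s, c S • v S := by
  rw [Finset.smul_sum]
  exact Finset.sum_congr rfl fun S _ => by rw [smul_smul, div_eq_inv_mul]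

lemma sum_add_smul {α : Type*} (s : Finset α) (c d : α → ℝ) (v : α → Fin n → ℝ) :
    ∑ S ∈ s, (c S + d S) • v S = ∑ S ∈ s, c S • v S + ∑ S ∈ s, d S • v S := by
  rw [← Finset.sum_add_distrib]
  exact Finset.sum_congr rfl fun S _ => add_smul ..

lemma sum_sum_smul {α β : Type*} (s : Finset α) (t : Finset β) (c : β → α → ℝ)
    (v : α → Fin n → ℝ) :
    ∑ S ∈ s, (∑ S' ∈ t, c S' S) • v S = ∑ S' ∈ t, ∑ S ∈ s, c S' S • v S := by
  simp_rw [Finset.sum_smul]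
  exact Finset.sum_comm

end Helpers


/-- If `H` is `T0`-balanced but `H ∪ T` is not, there exists `y` with `y(N) = 0`,
`y ≥ 0` on `T0 ∪ H ∪ T`, `y = 0` on `H`, and `y(S') > 0` for some `S' ∈ T`. -/
theorem stmt16 (n : ℕ) (T0 H T : Finset (Finset (Fin n)))
    (hH : IsT0Balanced n T0 H) (hHT : ¬ IsT0Balanced n T0 (H ∪ T)) :
    ∃ y : Fin n → ℝ, (∑ i, y i = 0) ∧
      (∀ S ∈ T0 ∪ H ∪ T, 0 ≤ ∑ i ∈ S, y i) ∧
      (∀ S ∈ H, ∑ i ∈ S, y i = 0) ∧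
      ∃ S' ∈ T, 0 < ∑ i ∈ S', y i := by
  classical
  obtain ⟨γH, ωH, hγH, hωH, heqH⟩ := hH
  set g : ({S // S ∈ T0}) ⊕ (({S // S ∈ H ∪ T}) ⊕ Unit) → Fin n → ℝ :=
    Sum.elim (fun S => ind n S.1)
      (Sum.elim (fun S => ind n S.1) (fun _ => -ind n Finset.univ)) with hg
  have hconv : ∀ a : ({S // S ∈ T0}) ⊕ (({S // S ∈ H ∪ T}) ⊕ Unit) → ℝ,
      ∑ i, a i • g i =
        (∑ S ∈ T0, (if h : S ∈ T0 then a (Sum.inl ⟨S, h⟩) else 0) • ind n S)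
        + ((∑ S ∈ H ∪ T,
            (if h : S ∈ H ∪ T then a (Sum.inr (Sum.inl ⟨S, h⟩)) else 0) • ind n S)
          + a (Sum.inr (Sum.inr ())) • (-ind n Finset.univ)) := by
    intro a
    rw [Fintype.sum_sum_type, Fintype.sum_sum_type]
    congr 1
    · rw [← Finset.sum_coe_sort T0
        (fun S => (if h : S ∈ T0 then a (Sum.inl ⟨S, h⟩) else 0) • ind n S)]
      refine Finset.sum_congr rfl fun i _ => ?_
      simp [hg, dif_pos i.2]
    · congr 1
      · rw [← Finset.sum_coe_sort (H ∪ T)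
          (fun S => (if h : S ∈ H ∪ T then a (Sum.inr (Sum.inl ⟨S, h⟩)) else 0) • ind n S)]
        refine Finset.sum_congr rfl fun i _ => ?_
        simp [hg, dif_pos i.2]
      · simp [hg]
  have key : ∃ S' ∈ T, ¬ ∃ a : ({S // S ∈ T0}) ⊕ (({S // S ∈ H ∪ T}) ⊕ Unit) → ℝ,
      (∀ i, 0 ≤ a i) ∧ ∑ i, a i • g i = ind n Finset.univ - ind n S' := by
    by_contra hcon
    push_neg at hcon
    have hrep : ∀ S' : Finset (Fin n), ∃ γ ω : Finset (Fin n) → ℝ,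
        (∀ S, 0 ≤ γ S) ∧ (∀ S, 0 ≤ ω S) ∧ (S' ∈ T → 0 < ω S') ∧
        (S' ∈ T → (∑ S ∈ T0, γ S • ind n S) + (∑ S ∈ H ∪ T, ω S • ind n S)
          = ind n Finset.univ) := by
      intro S'
      by_cases hS' : S' ∈ T
      · obtain ⟨a, ha, hsum⟩ := hcon S' hS'
        set b : ℝ := a (Sum.inr (Sum.inr ())) with hb
        set γa : Finset (Fin n) → ℝ :=
          fun S => if h : S ∈ T0 then a (Sum.inl ⟨S, h⟩) else 0 with hγa
        set ωa : Finset (Fin n) → ℝ :=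
          fun S => if h : S ∈ H ∪ T then a (Sum.inr (Sum.inl ⟨S, h⟩)) else 0 with hωa
        have hb0 : 0 ≤ b := ha _
        have hbne : (1 + b) ≠ 0 := by positivity
        have hbpos : (0:ℝ) < 1 + b := by positivity
        have hγa0 : ∀ S, 0 ≤ γa S := by
          intro S; rw [hγa]; dsimp only; split
          · exact ha _
          · exact le_rfl
        have hωa0 : ∀ S, 0 ≤ ωa S := by
          intro S; rw [hωa]; dsimp only; split
          · exact ha _
          · exact le_rfl
        have hsum' : (∑ S ∈ T0, γa S • ind n S)
            + ((∑ S ∈ H ∪ T, ωa S • ind n S) + b • (-ind n Finset.univ))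
            = ind n Finset.univ - ind n S' := by
          rw [← hconv a]; exact hsum
        have hkey : (∑ S ∈ T0, γa S • ind n S)
            + ((∑ S ∈ H ∪ T, ωa S • ind n S) + ind n S')
            = (1 + b) • ind n Finset.univ := by
          rw [smul_neg] at hsum'
          rw [add_smul, one_smul]
          calc (∑ S ∈ T0, γa S • ind n S)
              + ((∑ S ∈ H ∪ T, ωa S • ind n S) + ind n S')
              = ((∑ S ∈ T0, γa S • ind n S)
                + ((∑ S ∈ H ∪ T, ωa S • ind n S) + -(b • ind n Finset.univ)))
                + (b • ind n Finset.univ + ind n S') := by abel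
            _ = (ind n Finset.univ - ind n S') + (b • ind n Finset.univ + ind n S') := by
                rw [hsum']
            _ = ind n Finset.univ + b • ind n Finset.univ := by abel
        refine ⟨fun S => γa S / (1 + b),
          fun S => (ωa S + if S = S' then 1 else 0) / (1 + b),
          fun S => div_nonneg (hγa0 S) hbpos.le,
          fun S => div_nonneg (add_nonneg (hωa0 S) (by split <;> norm_num)) hbpos.le,
          fun _ => div_pos (by have := hωa0 S'; rw [if_pos rfl]; linarith) hbpos,
          fun _ => ?_⟩
        have hiteind : ∑ S ∈ H ∪ T, (if S = S' then (1:ℝ) else 0) • ind n S = ind n S' := by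
          rw [Finset.sum_eq_single S' (fun c _ hc => by rw [if_neg hc, zero_smul])
            (fun hnot => absurd (Finset.mem_union_right H hS') hnot)]
          rw [if_pos rfl, one_smul]
        rw [sum_div_smul, sum_div_smul, sum_add_smul, hiteind, ← smul_add, hkey,
          smul_smul, inv_mul_cancel₀ hbne, one_smul]
      · exact ⟨0, 0, fun S => le_rfl, fun S => le_rfl,
          fun h => absurd h hS', fun h => absurd h hS'⟩
    choose Γ Ω hΓ hΩ hΩpos hEq using hrep
    apply hHT
    set k : ℝ := (T.card : ℝ) + 1 with hk
    have hk0 : (0:ℝ) < k := by positivity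
    set γH' : Finset (Fin n) → ℝ := fun S => if S ∈ T0 then γH S else 0 with hγH'
    set ωH' : Finset (Fin n) → ℝ := fun S => if S ∈ H then ωH S else 0 with hωH'
    have hγH'0 : ∀ S, 0 ≤ γH' S := by
      intro S; rw [hγH']; dsimp only; split
      · exact hγH _ ‹_›
      · exact le_rfl
    have hωH'0 : ∀ S, 0 ≤ ωH' S := by
      intro S; rw [hωH']; dsimp only; split
      · exact (hωH _ ‹_›).le
      · exact le_rfl
    have heqH' : (∑ S ∈ T0, γH' S • ind n S) + (∑ S ∈ H ∪ T, ωH' S • ind n S)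
        = ind n Finset.univ := by
      have h1 : ∑ S ∈ T0, γH' S • ind n S = ∑ S ∈ T0, γH S • ind n S :=
        Finset.sum_congr rfl fun S hS => by rw [hγH']; simp only [if_pos hS]
      have h2 : ∑ S ∈ H ∪ T, ωH' S • ind n S = ∑ S ∈ H, ωH S • ind n S := by
        rw [← Finset.sum_subset Finset.subset_union_left
          (fun S _ hS => by simp only [hωH']; rw [if_neg hS, zero_smul])]
        exact Finset.sum_congr rfl fun S hS => by rw [hωH']; simp only [if_pos hS]
      rw [h1, h2, heqH]
    refine ⟨fun S => (γH' S + ∑ S' ∈ T, Γ S' S) / k,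
      fun S => (ωH' S + ∑ S' ∈ T, Ω S' S) / k, ?_, ?_, ?_⟩
    · intro S _
      exact div_nonneg (add_nonneg (hγH'0 S) (Finset.sum_nonneg fun S' _ => hΓ S' S)) hk0.le
    · intro S hS
      refine div_pos ?_ hk0
      rcases Finset.mem_union.mp hS with h | h
      · have h1 : 0 < ωH' S := by rw [hωH']; dsimp only; rw [if_pos h]; exact hωH S h
        have h2 : 0 ≤ ∑ S' ∈ T, Ω S' S := Finset.sum_nonneg fun S' _ => hΩ S' S
        linarith
      · have h1 : Ω S S ≤ ∑ S' ∈ T, Ω S' S :=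
          Finset.single_le_sum (fun S' _ => hΩ S' S) h
        have h2 : 0 < Ω S S := hΩpos S h
        have h3 := hωH'0 S
        linarith
    · rw [sum_div_smul, sum_div_smul, sum_add_smul, sum_add_smul, sum_sum_smul, sum_sum_smul,
        ← smul_add]
      have hswap : (∑ S ∈ T0, γH' S • ind n S + ∑ S' ∈ T, ∑ S ∈ T0, Γ S' S • ind n S)
          + (∑ S ∈ H ∪ T, ωH' S • ind n S + ∑ S' ∈ T, ∑ S ∈ H ∪ T, Ω S' S • ind n S)
          = ((∑ S ∈ T0, γH' S • ind n S) + ∑ S ∈ H ∪ T, ωH' S • ind n S)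
            + ∑ S' ∈ T, ((∑ S ∈ T0, Γ S' S • ind n S) + ∑ S ∈ H ∪ T, Ω S' S • ind n S) := by
        rw [Finset.sum_add_distrib]; abel
      rw [hswap, heqH', Finset.sum_congr rfl (fun S' hS' => hEq S' hS'), Finset.sum_const]
      have hcast : ind n Finset.univ + T.card • ind n Finset.univ = k • ind n Finset.univ := by
        rw [hk, add_smul, one_smul, add_comm]
        congr 1
        exact (Nat.cast_smul_eq_nsmul ℝ _ _).symm
      rw [hcast, smul_smul, inv_mul_cancel₀ (ne_of_gt hk0), one_smul]
  obtain ⟨S', hS'T, hnrep⟩ := key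
  obtain ⟨y, hy, hxy⟩ := farkas n g (ind n Finset.univ - ind n S') hnrep
  have h1 : ∀ S ∈ T0, 0 ≤ ∑ i ∈ S, y i := fun S hS => by
    have h := hy (Sum.inl ⟨S, hS⟩)
    rwa [hg, Sum.elim_inl, ind_dot] at h
  have h2 : ∀ S ∈ H ∪ T, 0 ≤ ∑ i ∈ S, y i := fun S hS => by
    have h := hy (Sum.inr (Sum.inl ⟨S, hS⟩))
    rwa [hg, Sum.elim_inr, Sum.elim_inl, ind_dot] at h
  have h3 : ∑ i, y i ≤ 0 := by
    have h := hy (Sum.inr (Sum.inr ()))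
    rw [hg, Sum.elim_inr, Sum.elim_inr, neg_dotProduct, ind_dot] at h
    linarith
  have hsum0 : ∑ S ∈ T0, γH S * ∑ i ∈ S, y i + ∑ S ∈ H, ωH S * ∑ i ∈ S, y i = ∑ i, y i := by
    have h := congrArg (· ⬝ᵥ y) heqH
    simpa only [add_dotProduct, sum_dot, smul_dotProduct, smul_eq_mul, ind_dot] using h
  have hA : 0 ≤ ∑ S ∈ T0, γH S * ∑ i ∈ S, y i :=
    Finset.sum_nonneg fun S hS => mul_nonneg (hγH S hS) (h1 S hS)
  have hB : 0 ≤ ∑ S ∈ H, ωH S * ∑ i ∈ S, y i :=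
    Finset.sum_nonneg fun S hS => mul_nonneg (hωH S hS).le (h2 S (Finset.mem_union_left T hS))
  have hN : ∑ i, y i = 0 := le_antisymm h3 (by linarith)
  have hHz : ∀ S ∈ H, ∑ i ∈ S, y i = 0 := by
    have hzero : ∑ S ∈ H, ωH S * ∑ i ∈ S, y i = 0 := by
      rw [hN] at hsum0; linarith
    intro S hS
    have h := (Finset.sum_eq_zero_iff_of_nonneg
      (fun S hS => mul_nonneg (hωH S hS).le (h2 S (Finset.mem_union_left T hS)))).mp hzero S hS
    exact (mul_eq_zero.mp h).resolve_left (ne_of_gt (hωH S hS))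
  have hS'pos : 0 < ∑ i ∈ S', y i := by
    rw [sub_dotProduct, ind_dot, ind_dot] at hxy
    have : ∑ i ∈ Finset.univ, y i = 0 := hN
    linarith
  refine ⟨y, hN, ?_, hHz, ⟨S', hS'T, hS'pos⟩⟩
  intro S hS
  rcases Finset.mem_union.mp hS with h | h
  · rcases Finset.mem_union.mp h with h' | h'
    · exact h1 S h'
    · exact h2 S (Finset.mem_union_left T h')
  · exact h2 S (Finset.mem_union_right H h)
end

section
/- Let x ∈ ℝ^n be efficient (x(N) = v(N)) and let z be an efficient vector with z(S) ≥ x(S) for all S in a finite T0-balanced collection T1, and additionally z_i ≥ v({i}) for all i while T0 = {{i} : x_i = v({i})}. Then z(S) = x(S) for all S ∈ T1. -/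
open Finset

/-- Induction step for the nucleolus uniqueness: if `x, z` are efficient, `z` dominates `x`
on a `T0`-balanced collection `T1` (with `T0 = {{i} : x i = v {i}}`) and `z` is an
imputation, then `z(S) = x(S)` on `T1`. -/
theorem stmt18 (n : ℕ) (v : Finset (Fin n) → ℝ) (x z : Fin n → ℝ)
    (T1 : Finset (Finset (Fin n)))
    (hx : ∑ i, x i = v Finset.univ) (hz : ∑ i, z i = v Finset.univ)
    (hbal : IsT0Balanced n
      ((Finset.univ.filter (fun i => x i = v {i})).image (fun i => ({i} : Finset (Fin n)))) T1)
    (hdom : ∀ S ∈ T1, ∑ i ∈ S, x i ≤ ∑ i ∈ S, z i)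
    (himp : ∀ i, v {i} ≤ z i) :
    ∀ S ∈ T1, ∑ i ∈ S, z i = ∑ i ∈ S, x i := by
  obtain ⟨γ, ω, hγ, hω, heq⟩ := hbal
  set T0 := (Finset.univ.filter (fun i => x i = v {i})).image (fun i => ({i} : Finset (Fin n)))
  set y : Fin n → ℝ := fun i => z i - x i with hy
  have hyN : ∑ i, y i = 0 := by simp [hy, Finset.sum_sub_distrib, hx, hz]
  have hdot : ∀ S : Finset (Fin n), ∑ i, ind n S i * y i = ∑ i ∈ S, y i := by
    intro S
    simp [ind, ite_mul, Finset.sum_ite_mem]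
  have key : (∑ S ∈ T0, γ S * ∑ i ∈ S, y i) + (∑ S ∈ T1, ω S * ∑ i ∈ S, y i) = 0 := by
    have h := congrArg (fun f : Fin n → ℝ => ∑ i, f i * y i) heq
    simp only [Pi.add_apply, Finset.sum_apply, Pi.smul_apply, smul_eq_mul, add_mul,
      Finset.sum_add_distrib, Finset.sum_mul] at h
    rw [hdot Finset.univ, hyN] at h
    rw [← h, Finset.sum_comm, Finset.sum_comm (s := Finset.univ)]
    congr 1
    all_goals
      refine Finset.sum_congr rfl fun S _ => ?_
      rw [← hdot S, Finset.mul_sum]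
      exact Finset.sum_congr rfl fun i _ => by ring
  have h0 : ∀ S ∈ T0, 0 ≤ γ S * ∑ i ∈ S, y i := by
    intro S hS
    simp only [T0, Finset.mem_image, Finset.mem_filter] at hS
    obtain ⟨i, ⟨_, hxi⟩, rfl⟩ := hS
    have : 0 ≤ y i := by simp [hy]; rw [hxi]; exact himp i
    have := mul_nonneg (hγ _ (by simp [T0, Finset.mem_image]; exact ⟨i, hxi, rfl⟩)) (by simpa using this)
    simpa using this
  have h1 : ∀ S ∈ T1, 0 ≤ ω S * ∑ i ∈ S, y i := by
    intro S hS
    exact mul_nonneg (hω S hS).le (by simp [hy, Finset.sum_sub_distrib]; exact hdom S hS)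
  have hsum1 : ∑ S ∈ T1, ω S * ∑ i ∈ S, y i = 0 := by
    have hA : 0 ≤ ∑ S ∈ T0, γ S * ∑ i ∈ S, y i := Finset.sum_nonneg h0
    have hB : 0 ≤ ∑ S ∈ T1, ω S * ∑ i ∈ S, y i := Finset.sum_nonneg h1
    linarith
  intro S hS
  have := (Finset.sum_eq_zero_iff_of_nonneg h1).mp hsum1 S hS
  have hyS : ∑ i ∈ S, y i = 0 := by
    rcases mul_eq_zero.mp this with h | h
    · exact absurd h (ne_of_gt (hω S hS))
    · exact h
  have : ∑ i ∈ S, z i - ∑ i ∈ S, x i = 0 := by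
    rw [← Finset.sum_sub_distrib]; exact hyS
  linarith
end
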